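/- arXiv:2403.15159 — 5 statements merged into one kernel-verified Lean document; each statement's English description precedes it below -/
import Mathlib

section
/- Suppose the shifted infinite-horizon optimal value function V̂_∞ satisfies: (a) V̂_∞(X^s) = 0 at the turnpike state X^s; (b) approximate continuity: there exist ε > 0 and γ ∈ 𝒦_∞ such that d(X, X^s) < ε implies |V̂_∞(X) − V̂_∞(X^s)| ≤ γ(d(X, X^s)); and (c) the turnpike property: for every initial state X there exists θ ∈ ℒ (continuous, strictly decreasing to 0) such that for each N and each L ∈ ℕ there exists a set Q(X,L,N) ⊆ {0,…,N} of at most L elements with d(X*_N(k,X), X^s) ≤ θ(L) for all k ∈ {0,…,N} \ Q(X,L,N), where X*_N is the horizon-N optimal trajectory. Then for every X, |V̂_∞(X)| < ∞. -/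
/-!
The lower bound is optimal operation, `0 ≤ V̂_∞`. For the upper bound, some point of an optimal
trajectory from `X` enters the ball where approximate continuity bounds `V̂_∞` by a real number,
and dynamic programming carries that finite bound back to `X` at the price of a finite cost.
-/

open Filter Topology

theorem Finset.exists_le_notMem_of_card_le {Q : Finset ℕ} {N : ℕ} (hQ : Q.card ≤ N) :
    ∃ k ≤ N, k ∉ Q := by
  obtain ⟨k, hk, hkQ⟩ := Finset.exists_mem_notMem_of_card_lt_card
    (t := Finset.range (N + 1)) (by simpa using Nat.lt_succ_of_le hQ)
  exact ⟨k, Nat.lt_succ_iff.mp (Finset.mem_range.mp hk), hkQ⟩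

theorem exists_dist_lt_of_turnpike {S : Type*} [MetricSpace S] {XN : ℕ → ℕ → S} {Xs : S}
    {θ : ℕ → ℝ} (hθ : Tendsto θ atTop (𝓝 0)) {Q : ℕ → ℕ → Finset ℕ}
    (hQcard : ∀ L N, (Q L N).card ≤ L)
    (hturn : ∀ L N k, k ≤ N → k ∉ Q L N → dist (XN N k) Xs ≤ θ L) {ε : ℝ} (hε : 0 < ε) :
    ∃ N, ∃ k ≤ N, dist (XN N k) Xs < ε := by
  obtain ⟨L, hL⟩ : ∃ L, θ L < ε := (hθ.eventually (gt_mem_nhds hε)).exists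
  obtain ⟨k, hk, hkQ⟩ := Finset.exists_le_notMem_of_card_le (hQcard L L)
  exact ⟨L, k, hk, (hturn L L k hk hkQ).trans_lt hL⟩

theorem shifted_value_finite_general {S : Type*} [MetricSpace S]
    (Vinf : S → EReal)        -- shifted infinite-horizon value function `V̂_∞`
    (Xs : S)                  -- turnpike state `X^s`
    (hXs : Vinf Xs = 0)       -- (a) `V̂_∞(X^s) = 0`
    (hop : ∀ X, 0 ≤ Vinf X)   -- optimal operation at the stationary pair
    -- (b) approximate continuity at `X^s` with a `𝒦_∞` function `γ`
    (ε : ℝ) (hε : 0 < ε)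
    (γ : ℝ → ℝ)
    (hcont : ∀ X, dist X Xs < ε →
      -(((γ (dist X Xs) : ℝ)) : EReal) ≤ Vinf X - Vinf Xs ∧
        Vinf X - Vinf Xs ≤ ((γ (dist X Xs) : ℝ) : EReal))
    -- horizon-`N` optimal trajectories `X*_N(·, X)` with finite shifted partial costs `Ĵ_M`
    (XN : S → ℕ → ℕ → S)
    (J : S → ℕ → ℕ → ℝ)
    -- dynamic programming / suboptimality: `V̂_∞(X) ≤ Ĵ_M(X, U*_N) + V̂_∞(X*_N(M, X))`
    (hDPP : ∀ X N M, M ≤ N → Vinf X ≤ ((J X N M : ℝ) : EReal) + Vinf (XN X N M))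
    -- (c) turnpike property with `θ ∈ ℒ` and exceptional sets `Q(X, L, N)` of at most `L` elements
    (θ : S → ℕ → ℝ)
    (hθ : ∀ X, Antitone (θ X) ∧ Tendsto (θ X) atTop (nhds 0) ∧ ∀ L, 0 ≤ θ X L)
    (Q : S → ℕ → ℕ → Finset ℕ)
    (hQcard : ∀ X L N, (Q X L N).card ≤ L)
    (hturn : ∀ X L N k, k ≤ N → k ∉ Q X L N → dist (XN X N k) Xs ≤ θ X L) :
    ∀ X, Vinf X ≠ ⊤ ∧ Vinf X ≠ ⊥ := by
  intro X
  refine ⟨?_, ne_bot_of_le_ne_bot (by simp) (hop X)⟩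
  obtain ⟨N, k, hk, hnear⟩ :=
    exists_dist_lt_of_turnpike (hθ X).2.1 (hQcard X) (hturn X) hε
  have hnear_finite : Vinf (XN X N k) ≠ ⊤ := by
    have hbound := (hcont _ hnear).2
    rw [hXs, sub_zero] at hbound
    exact ne_top_of_le_ne_top (EReal.coe_ne_top _) hbound
  exact ne_top_of_le_ne_top (EReal.add_ne_top (EReal.coe_ne_top _) hnear_finite) (hDPP X N k hk)

/-- Lemma 1: under optimal operation, the turnpike property and approximate continuity of
the shifted infinite-horizon value function `V̂_∞` at the turnpike `X^s`, `|V̂_∞(X)| < ∞`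
for every state `X`. -/
theorem shifted_value_finite {S : Type*} [MetricSpace S]
    (Vinf : S → EReal)        -- shifted infinite-horizon value function `V̂_∞`
    (Xs : S)                  -- turnpike state `X^s`
    (hXs : Vinf Xs = 0)       -- (a) `V̂_∞(X^s) = 0`
    (hop : ∀ X, 0 ≤ Vinf X)   -- optimal operation at the stationary pair
    -- (b) approximate continuity at `X^s` with a `𝒦_∞` function `γ`
    (ε : ℝ) (hε : 0 < ε)
    (γ : ℝ → ℝ) (hγ0 : γ 0 = 0) (hγmono : StrictMonoOn γ (Set.Ici 0))
    (hγcont : Continuous γ) (hγtop : Tendsto γ atTop atTop)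
    (hcont : ∀ X, dist X Xs < ε →
      -(((γ (dist X Xs) : ℝ)) : EReal) ≤ Vinf X - Vinf Xs ∧
        Vinf X - Vinf Xs ≤ ((γ (dist X Xs) : ℝ) : EReal))
    -- horizon-`N` optimal trajectories `X*_N(·, X)` with finite shifted partial costs `Ĵ_M`
    (XN : S → ℕ → ℕ → S) (hinit : ∀ X N, XN X N 0 = X)
    (J : S → ℕ → ℕ → ℝ)
    -- dynamic programming / suboptimality: `V̂_∞(X) ≤ Ĵ_M(X, U*_N) + V̂_∞(X*_N(M, X))`
    (hDPP : ∀ X N M, M ≤ N → Vinf X ≤ ((J X N M : ℝ) : EReal) + Vinf (XN X N M))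
    -- (c) turnpike property with `θ ∈ ℒ` and exceptional sets `Q(X, L, N)` of at most `L` elements
    (θ : S → ℕ → ℝ)
    (hθ : ∀ X, Antitone (θ X) ∧ Tendsto (θ X) atTop (nhds 0) ∧ ∀ L, 0 ≤ θ X L)
    (Q : S → ℕ → ℕ → Finset ℕ)
    (hQsub : ∀ X L N, Q X L N ⊆ Finset.range (N + 1))
    (hQcard : ∀ X L N, (Q X L N).card ≤ L)
    (hturn : ∀ X L N k, k ≤ N → k ∉ Q X L N → dist (XN X N k) Xs ≤ θ X L) :
    ∀ X, Vinf X ≠ ⊤ ∧ Vinf X ≠ ⊥ :=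
  shifted_value_finite_general Vinf Xs hXs hop ε hε γ hcont XN J hDPP θ hθ Q hQcard hturn
end

section
/- Under the infinite-horizon turnpike property and approximate continuity of V̂_∞ at the turnpike X^s, the identity V̂_∞(X) = Ĵ_M(X, U*_∞) + V̂_∞(X^s) + R₁(X,M) holds with |R₁(X,M)| ≤ γ_{V∞}(θ_∞(L)) for all sufficiently large L and all M not in the exceptional set Q(X,L,∞), where Ĵ_M denotes the shifted cost of the first M steps of the infinite-horizon optimal trajectory. -/
open Filter

/-- Lemma 2: under the infinite-horizon turnpike property and approximate continuity of
`V̂_∞` at the turnpike `X^s`, the identity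
`V̂_∞(X) = Ĵ_M(X, U*_∞) + V̂_∞(X^s) + R₁(X, M)` holds with
`|R₁(X, M)| ≤ γ_{V∞}(θ_∞(L))` for all sufficiently large `L` and all `M ∉ Q(X, L, ∞)`. -/
theorem shifted_value_infinite_horizon_decomposition {S : Type*} [MetricSpace S]
    (Vinf : S → ℝ)            -- shifted infinite-horizon value function `V̂_∞`
    (Xs : S)                  -- turnpike state `X^s`
    (X : S)
    (Xinf : ℕ → S)            -- infinite-horizon optimal trajectory `X*_∞(·, X)`
    (hinit : Xinf 0 = X)
    (J : ℕ → ℝ)               -- shifted partial costs `Ĵ_M(X, U*_∞)`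
    -- infinite-horizon dynamic programming principle
    (hDPP : ∀ M : ℕ, Vinf X = J M + Vinf (Xinf M))
    -- infinite-horizon turnpike property with `θ_∞ ∈ ℒ` and exceptional sets `Q(X, L, ∞)`
    (θinf : ℕ → ℝ) (hθanti : Antitone θinf) (hθ0 : Tendsto θinf atTop (nhds 0))
    (hθnn : ∀ L, 0 ≤ θinf L)
    (Q : ℕ → Set ℕ) (hQfin : ∀ L, (Q L).Finite) (hQcard : ∀ L, Nat.card (Q L) ≤ L)
    (hturn : ∀ L k, k ∉ Q L → dist (Xinf k) Xs ≤ θinf L)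
    -- approximate continuity of `V̂_∞` at `X^s` with `γ_{V∞} ∈ 𝒦_∞`
    (γ : ℝ → ℝ) (hγ0 : γ 0 = 0) (hγmono : StrictMonoOn γ (Set.Ici 0))
    (hγcont : Continuous γ) (hγtop : Tendsto γ atTop atTop)
    (ε : ℝ) (hε : 0 < ε)
    (hcont : ∀ Y, dist Y Xs < ε → |Vinf Y - Vinf Xs| ≤ γ (dist Y Xs)) :
    ∃ L0 : ℕ, ∀ L ≥ L0, ∀ M : ℕ, M ∉ Q L →
      |Vinf X - (J M + Vinf Xs)| ≤ γ (θinf L) := by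
  obtain ⟨L0, hL0⟩ := (Metric.tendsto_atTop.mp hθ0 ε hε)
  refine ⟨L0, fun L hL M hM => ?_⟩
  have hθε : θinf L < ε := by
    have := hL0 L hL
    rw [Real.dist_eq, abs_sub_lt_iff] at this
    linarith [this.1]
  have hd : dist (Xinf M) Xs ≤ θinf L := hturn L M hM
  have hdε : dist (Xinf M) Xs < ε := lt_of_le_of_lt hd hθε
  have h1 : |Vinf (Xinf M) - Vinf Xs| ≤ γ (dist (Xinf M) Xs) := hcont _ hdε
  have h2 : γ (dist (Xinf M) Xs) ≤ γ (θinf L) :=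
    hγmono.monotoneOn (Set.mem_Ici.mpr dist_nonneg) (Set.mem_Ici.mpr (hθnn L)) hd
  have := hDPP M
  have heq : Vinf X - (J M + Vinf Xs) = Vinf (Xinf M) - Vinf Xs := by linarith
  rw [heq]
  exact h1.trans h2
end

section
/- Under the finite-horizon turnpike property and approximate continuity of the shifted finite-horizon value functions V̂_N at the turnpike X^s, the identity V̂_N(X) = Ĵ_M(X, U*_N) + V̂_{N−M}(X^s) + R₂(X,M,N) holds with |R₂(X,M,N)| ≤ γ_V(N−M, θ(L)) for all N ∈ ℕ, all sufficiently large L, and all M ∈ {0,…,N} not in the exceptional set Q(X,L,N). -/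
open Filter

/-- Lemma 3: under the finite-horizon turnpike property and approximate continuity of the
shifted finite-horizon value functions `V̂_N` at the turnpike `X^s`, the identity
`V̂_N(X) = Ĵ_M(X, U*_N) + V̂_{N−M}(X^s) + R₂(X, M, N)` holds with
`|R₂(X, M, N)| ≤ γ_V(N−M, θ(L))` for all `N`, all sufficiently large `L`, and all
`M ∈ {0,…,N} ∖ Q(X, L, N)`. -/
theorem shifted_value_finite_horizon_decomposition {S : Type*} [MetricSpace S]
    (V : ℕ → S → ℝ)           -- shifted finite-horizon value functions `V̂_N`
    (Xs : S)                  -- turnpike state `X^s`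
    (X : S)
    (XN : ℕ → ℕ → S)          -- horizon-`N` optimal trajectories: `XN N k = X*_N(k, X)`
    (hinit : ∀ N, XN N 0 = X)
    (J : ℕ → ℕ → ℝ)           -- shifted partial costs: `J N M = Ĵ_M(X, U*_N)`
    -- finite-horizon dynamic programming principle
    (hDPP : ∀ N M, M ≤ N → V N X = J N M + V (N - M) (XN N M))
    -- finite-horizon turnpike property with `θ ∈ ℒ` and exceptional sets `Q(X, L, N)`
    (θ : ℕ → ℝ) (hθanti : Antitone θ) (hθ0 : Tendsto θ atTop (nhds 0)) (hθnn : ∀ L, 0 ≤ θ L)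
    (Q : ℕ → ℕ → Finset ℕ)    -- `Q L N = Q(X, L, N)`
    (hQsub : ∀ L N, Q L N ⊆ Finset.range (N + 1)) (hQcard : ∀ L N, (Q L N).card ≤ L)
    (hturn : ∀ L N k, k ≤ N → k ∉ Q L N → dist (XN N k) Xs ≤ θ L)
    -- approximate continuity of `V̂` at `X^s` with `γ_V(m, r) → 0` as `m → ∞`, `r → 0`,
    -- monotone in each argument
    (γV : ℕ → ℝ → ℝ)
    (hγVm : ∀ r, Antitone fun m => γV m r)
    (hγVr : ∀ m, MonotoneOn (γV m) (Set.Ici 0))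
    (hγVlim : ∀ η > (0 : ℝ), ∃ m0 : ℕ, ∃ r0 > (0 : ℝ),
      ∀ m ≥ m0, ∀ r, 0 ≤ r → r ≤ r0 → γV m r ≤ η)
    (ε : ℝ) (hε : 0 < ε)
    (hcont : ∀ (m : ℕ) (Y : S), dist Y Xs < ε → |V m Y - V m Xs| ≤ γV m (dist Y Xs)) :
    ∃ L0 : ℕ, ∀ L ≥ L0, ∀ N M, M ≤ N → M ∉ Q L N →
      |V N X - (J N M + V (N - M) Xs)| ≤ γV (N - M) (θ L) := by
  have hev : ∀ᶠ L in atTop, θ L < ε := hθ0.eventually (gt_mem_nhds hε)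
  obtain ⟨L0, hL0⟩ := hev.exists_forall_of_atTop
  refine ⟨L0, fun L hL N M hMN hMQ => ?_⟩
  have hθε : θ L < ε := hL0 L hL
  have hd : dist (XN N M) Xs ≤ θ L := hturn L N M hMN hMQ
  have hdε : dist (XN N M) Xs < ε := lt_of_le_of_lt hd hθε
  have h1 : |V (N - M) (XN N M) - V (N - M) Xs| ≤ γV (N - M) (dist (XN N M) Xs) :=
    hcont (N - M) (XN N M) hdε
  have h2 : γV (N - M) (dist (XN N M) Xs) ≤ γV (N - M) (θ L) :=
    hγVr (N - M) (Set.mem_Ici.2 dist_nonneg) (Set.mem_Ici.2 (hθnn L)) hd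
  have hdpp := hDPP N M hMN
  have : V N X - (J N M + V (N - M) Xs) = V (N - M) (XN N M) - V (N - M) Xs := by
    rw [hdpp]; ring
  rw [this]
  exact h1.trans h2
end

section
/- Under the finite- and infinite-horizon turnpike properties and the approximate continuity of both V̂_N and V̂_∞ at the turnpike X^s, the shifted partial costs of the finite- and infinite-horizon optimal trajectories satisfy Ĵ_M(X, U*_∞) = Ĵ_M(X, U*_N) + R₃(X,M,N) with |R₃(X,M,N)| ≤ γ_V(N−M, θ_∞(L)) + γ_V(N−M, θ(L)) + γ_{V∞}(θ(L)) + γ_{V∞}(θ_∞(L)) for all N, all sufficiently large L, and all M ∈ {0,…,N} \ (Q(X,L,N) ∪ Q(X,L,∞)). -/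
open Filter

/-- Lemma 4: under the finite- and infinite-horizon turnpike properties and the approximate
continuity of both `V̂_N` and `V̂_∞` at the turnpike `X^s`, the shifted partial costs of the
finite- and infinite-horizon optimal trajectories satisfy
`Ĵ_M(X, U*_∞) = Ĵ_M(X, U*_N) + R₃(X, M, N)` with
`|R₃| ≤ γ_V(N−M, θ_∞(L)) + γ_V(N−M, θ(L)) + γ_{V∞}(θ(L)) + γ_{V∞}(θ_∞(L))`
for all `N`, all sufficiently large `L`, and all `M ∈ {0,…,N} ∖ (Q(X,L,N) ∪ Q(X,L,∞))`. -/
theorem exchange_finite_infinite_optimal_costs {S : Type*} [MetricSpace S]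
    (V : ℕ → S → ℝ)           -- shifted finite-horizon value functions `V̂_N`
    (Vinf : S → ℝ)            -- shifted infinite-horizon value function `V̂_∞`
    (Xs : S) (X : S)
    (XNT : ℕ → ℕ → S)         -- `XNT N k = X*_N(k, X)` (horizon-`N` optimal trajectory)
    (XinfT : ℕ → S)           -- `XinfT k = X*_∞(k, X)` (infinite-horizon optimal trajectory)
    (JN : ℕ → ℕ → ℝ)          -- `JN N M = Ĵ_M(X, U*_N)`
    (Jinf : ℕ → ℝ)            -- `Jinf M = Ĵ_M(X, U*_∞)`
    -- comparison inequalities from optimality and the dynamic programming principles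
    (hcmp1 : ∀ N M, M ≤ N →
      Jinf M + Vinf (XinfT M) ≤ JN N M + Vinf (XNT N M))
    (hcmp2 : ∀ N M, M ≤ N →
      JN N M + V (N - M) (XNT N M) ≤ Jinf M + V (N - M) (XinfT M))
    -- finite-horizon turnpike property, `θ ∈ ℒ`, exceptional sets `Qf L N = Q(X, L, N)`
    (θ : ℕ → ℝ) (hθanti : Antitone θ) (hθ0 : Tendsto θ atTop (nhds 0)) (hθnn : ∀ L, 0 ≤ θ L)
    (Qf : ℕ → ℕ → Finset ℕ)
    (hQfsub : ∀ L N, Qf L N ⊆ Finset.range (N + 1)) (hQfcard : ∀ L N, (Qf L N).card ≤ L)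
    (hturnf : ∀ L N k, k ≤ N → k ∉ Qf L N → dist (XNT N k) Xs ≤ θ L)
    -- infinite-horizon turnpike property, `θ_∞ ∈ ℒ`, exceptional sets `Qi L = Q(X, L, ∞)`
    (θinf : ℕ → ℝ) (hθianti : Antitone θinf) (hθi0 : Tendsto θinf atTop (nhds 0))
    (hθinn : ∀ L, 0 ≤ θinf L)
    (Qi : ℕ → Set ℕ) (hQifin : ∀ L, (Qi L).Finite) (hQicard : ∀ L, Nat.card (Qi L) ≤ L)
    (hturni : ∀ L k, k ∉ Qi L → dist (XinfT k) Xs ≤ θinf L)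
    -- approximate continuity of `V̂_N` near `X^s`
    (γV : ℕ → ℝ → ℝ)
    (hγVm : ∀ r, Antitone fun m => γV m r)
    (hγVr : ∀ m, MonotoneOn (γV m) (Set.Ici 0))
    (hγVlim : ∀ η > (0 : ℝ), ∃ m0 : ℕ, ∃ r0 > (0 : ℝ),
      ∀ m ≥ m0, ∀ r, 0 ≤ r → r ≤ r0 → γV m r ≤ η)
    -- approximate continuity of `V̂_∞` near `X^s` with `γ_{V∞} ∈ 𝒦_∞`
    (γi : ℝ → ℝ) (hγi0 : γi 0 = 0) (hγimono : StrictMonoOn γi (Set.Ici 0))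
    (hγicont : Continuous γi) (hγitop : Tendsto γi atTop atTop)
    (ε : ℝ) (hε : 0 < ε)
    (hcont : ∀ (m : ℕ) (Y : S), dist Y Xs < ε → |V m Y - V m Xs| ≤ γV m (dist Y Xs))
    (hconti : ∀ Y : S, dist Y Xs < ε → |Vinf Y - Vinf Xs| ≤ γi (dist Y Xs)) :
    ∃ L0 : ℕ, ∀ L ≥ L0, ∀ N M, M ≤ N → M ∉ Qf L N → M ∉ Qi L →
      |Jinf M - JN N M| ≤
        γV (N - M) (θinf L) + γV (N - M) (θ L) + γi (θ L) + γi (θinf L) := by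
  obtain ⟨L1, hL1⟩ := (Metric.tendsto_atTop.mp hθ0) ε hε
  obtain ⟨L2, hL2⟩ := (Metric.tendsto_atTop.mp hθi0) ε hε
  refine ⟨max L1 L2, fun L hL N M hMN hMQf hMQi => ?_⟩
  have hθε : θ L < ε := by
    have := hL1 L (le_trans (le_max_left _ _) hL)
    rwa [Real.dist_eq, sub_zero, abs_of_nonneg (hθnn L)] at this
  have hθiε : θinf L < ε := by
    have := hL2 L (le_trans (le_max_right _ _) hL)
    rwa [Real.dist_eq, sub_zero, abs_of_nonneg (hθinn L)] at this
  have hdN : dist (XNT N M) Xs ≤ θ L := hturnf L N M hMN hMQf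
  have hdI : dist (XinfT M) Xs ≤ θinf L := hturni L M hMQi
  have hdNε : dist (XNT N M) Xs < ε := lt_of_le_of_lt hdN hθε
  have hdIε : dist (XinfT M) Xs < ε := lt_of_le_of_lt hdI hθiε
  have hγimon : MonotoneOn γi (Set.Ici 0) := hγimono.monotoneOn
  have hmemN : dist (XNT N M) Xs ∈ Set.Ici (0:ℝ) := dist_nonneg
  have hmemI : dist (XinfT M) Xs ∈ Set.Ici (0:ℝ) := dist_nonneg
  have hmemθ : θ L ∈ Set.Ici (0:ℝ) := hθnn L
  have hmemθi : θinf L ∈ Set.Ici (0:ℝ) := hθinn L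
  have hgiθ : γi (dist (XNT N M) Xs) ≤ γi (θ L) := hγimon hmemN hmemθ hdN
  have hgiθi : γi (dist (XinfT M) Xs) ≤ γi (θinf L) := hγimon hmemI hmemθi hdI
  have hgiθnn : 0 ≤ γi (θ L) := by
    have := hγimon (Set.self_mem_Ici) hmemθ (hθnn L); rwa [hγi0] at this
  have hgiθinn : 0 ≤ γi (θinf L) := by
    have := hγimon (Set.self_mem_Ici) hmemθi (hθinn L); rwa [hγi0] at this
  have hγV0 : 0 ≤ γV (N - M) 0 := by
    have := hcont (N - M) Xs (by simpa using hε)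
    simpa using this
  have hgVθnn : 0 ≤ γV (N - M) (θ L) :=
    le_trans hγV0 (hγVr (N - M) Set.self_mem_Ici hmemθ (hθnn L))
  have hgVθinn : 0 ≤ γV (N - M) (θinf L) :=
    le_trans hγV0 (hγVr (N - M) Set.self_mem_Ici hmemθi (hθinn L))
  have hgVθ : γV (N - M) (dist (XNT N M) Xs) ≤ γV (N - M) (θ L) :=
    hγVr (N - M) hmemN hmemθ hdN
  have hgVθi : γV (N - M) (dist (XinfT M) Xs) ≤ γV (N - M) (θinf L) :=
    hγVr (N - M) hmemI hmemθi hdI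
  have hc1 := hcmp1 N M hMN
  have hc2 := hcmp2 N M hMN
  have hbN := hconti (XNT N M) hdNε
  have hbI := hconti (XinfT M) hdIε
  have hvN := hcont (N - M) (XNT N M) hdNε
  have hvI := hcont (N - M) (XinfT M) hdIε
  rw [abs_le] at hbN hbI hvN hvI ⊢
  constructor <;> linarith [hbN.1, hbN.2, hbI.1, hbI.2, hvN.1, hvN.2, hvI.1, hvI.2]
end

section
/- Suppose Ĵ^cl_K(X,μ_N) ≤ V̂_∞(X) + Kδ(N) for all K, where V̂_∞(X) is finite, V̂_∞ ≥ 0, and ℓ̂ = ℓ − c with c = ℓ(X^s,U^s). Then the MPC closed loop is approximately overtaking optimal: for every admissible control sequence U, liminf_{K→∞} ( Σ_{k=0}^{K−1} ( ℓ(X_U(k,X),U(k)) − ℓ(X_{μ_N}(k,X), μ_N(X_{μ_N}(k,X))) ) + Kδ(N) ) ≥ 0. -/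
open Filter Finset

/-- Trajectory of the deterministic controlled system `X(k+1) = F(X(k), U(k))`. -/
def traj {S C : Type*} (F : S → C → S) (x : S) (U : ℕ → C) : ℕ → S
  | 0 => x
  | k + 1 => F (traj F x U k) (U k)

/-!
Write `Ĵ_K(U) = Σ_{k<K} ℓ̂(X_U(k), U(k))`. The closed-loop bound `Ĵ^cl_K ≤ V̂_∞(X) + Kδ(N)` gives
`Σ_{k<K} (ℓ(X_U(k),U(k)) − ℓ(X_{μ_N}(k),μ_N(X_{μ_N}(k)))) + Kδ(N) ≥ (Ĵ_K(U) − Ĵ_K(U*_∞)) + (Ĵ_K(U*_∞) − V̂_∞(X))`,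
where the second bracket tends to `0`; hence the liminf is at least that of `Ĵ_K(U) − Ĵ_K(U*_∞)`,
which is nonnegative by optimal operation.
-/

theorem EReal.liminf_coe_le_liminf_coe_of_add_tendsto_zero_le {ι : Type*} {f : Filter ι}
    [f.NeBot] {a e u : ι → ℝ} (he : Tendsto e f (nhds 0)) (hu : ∀ᶠ i in f, a i + e i ≤ u i) :
    liminf (fun i => (a i : EReal)) f ≤ liminf (fun i => (u i : EReal)) f := by
  have he' : liminf (fun i => (e i : EReal)) f = 0 :=
    ((continuous_coe_real_ereal.tendsto 0).comp he).liminf_eq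
  calc liminf (fun i => (a i : EReal)) f
      = liminf (fun i => (a i : EReal)) f + liminf (fun i => (e i : EReal)) f := by
        rw [he', add_zero]
    _ ≤ liminf (fun i => ((a i + e i : ℝ) : EReal)) f := by
        simp only [EReal.coe_add]; exact EReal.le_liminf_add
    _ ≤ liminf (fun i => (u i : EReal)) f :=
        liminf_le_liminf (hu.mono fun i h => EReal.coe_le_coe_iff.mpr h)

theorem mpc_approximately_overtaking_optimal_general {S C : Type*}
    (F : S → C → S)           -- system dynamics
    (ℓ : S → C → ℝ) (c : ℝ)   -- stage cost and stationary cost `c = ℓ(X^s, U^s)`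
    (X : S) (μN : S → C)
    (Xcl : ℕ → S)             -- MPC closed-loop trajectory
    (VX δN : ℝ)  -- `VX = V̂_∞(X)`, finite and nonnegative
    -- shifted closed-loop performance bound `Ĵ^cl_K(X,μ_N) ≤ V̂_∞(X) + Kδ(N)`
    (hperf : ∀ K : ℕ,
      (∑ k ∈ Finset.range K, (ℓ (Xcl k) (μN (Xcl k)) - c)) ≤ VX + K * δN)
    -- `U*_∞` optimal for the shifted problem: `V̂_∞(X) = Σ_{k=0}^∞ ℓ̂(X_{U*_∞}(k), U*_∞(k))`
    (Ustar : ℕ → C)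
    (hVX : Tendsto
      (fun K => ∑ k ∈ Finset.range K, (ℓ (traj F X Ustar k) (Ustar k) - c))
      atTop (nhds VX))
    -- optimal operation: every admissible `U` is overtaken by `U*_∞` for the shifted cost
    (hop : ∀ U : ℕ → C,
      0 ≤ Filter.liminf
        (fun K => ((∑ k ∈ Finset.range K,
          ((ℓ (traj F X U k) (U k) - c) - (ℓ (traj F X Ustar k) (Ustar k) - c)) : ℝ) : EReal))
        atTop) :
    ∀ U : ℕ → C,
      0 ≤ Filter.liminf
        (fun K : ℕ => (((∑ k ∈ Finset.range K,
          (ℓ (traj F X U k) (U k) - ℓ (Xcl k) (μN (Xcl k)))) + K * δN : ℝ) : EReal))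
        atTop := by
  intro U
  refine (hop U).trans <| EReal.liminf_coe_le_liminf_coe_of_add_tendsto_zero_le
    (tendsto_sub_nhds_zero_iff.mpr hVX) (Eventually.of_forall fun K => ?_)
  have hsplit : ∑ k ∈ range K, (ℓ (traj F X U k) (U k) - ℓ (Xcl k) (μN (Xcl k)))
      = ∑ k ∈ range K, (ℓ (traj F X U k) (U k) - c)
        - ∑ k ∈ range K, (ℓ (Xcl k) (μN (Xcl k)) - c) := by
    rw [← sum_sub_distrib]
    exact sum_congr rfl fun k _ => by ring
  rw [hsplit, sum_sub_distrib]
  linarith [hperf K]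

/-- Corollary 2: approximate overtaking optimality of the MPC closed loop. If
`Ĵ^cl_K(X, μ_N) ≤ V̂_∞(X) + K·δ(N)` for all `K`, with `V̂_∞(X)` finite and nonnegative and
`ℓ̂ = ℓ − c`, then for every admissible control `U`,
`liminf_{K→∞} ( Σ_{k<K} (ℓ(X_U(k),U(k)) − ℓ(X_{μ_N}(k),μ_N(X_{μ_N}(k)))) + Kδ(N) ) ≥ 0`. -/
theorem mpc_approximately_overtaking_optimal {S C : Type*}
    (F : S → C → S)           -- system dynamics
    (ℓ : S → C → ℝ) (c : ℝ)   -- stage cost and stationary cost `c = ℓ(X^s, U^s)`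
    (X : S) (μN : S → C)
    (Xcl : ℕ → S)             -- MPC closed-loop trajectory
    (hcl0 : Xcl 0 = X)
    (hcl : ∀ k, Xcl (k + 1) = F (Xcl k) (μN (Xcl k)))
    (VX δN : ℝ) (hVXnn : 0 ≤ VX)  -- `VX = V̂_∞(X)`, finite and nonnegative
    -- shifted closed-loop performance bound `Ĵ^cl_K(X,μ_N) ≤ V̂_∞(X) + Kδ(N)`
    (hperf : ∀ K : ℕ,
      (∑ k ∈ Finset.range K, (ℓ (Xcl k) (μN (Xcl k)) - c)) ≤ VX + K * δN)
    -- `U*_∞` optimal for the shifted problem: `V̂_∞(X) = Σ_{k=0}^∞ ℓ̂(X_{U*_∞}(k), U*_∞(k))`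
    (Ustar : ℕ → C)
    (hVX : Tendsto
      (fun K => ∑ k ∈ Finset.range K, (ℓ (traj F X Ustar k) (Ustar k) - c))
      atTop (nhds VX))
    -- optimal operation: every admissible `U` is overtaken by `U*_∞` for the shifted cost
    (hop : ∀ U : ℕ → C,
      0 ≤ Filter.liminf
        (fun K => ((∑ k ∈ Finset.range K,
          ((ℓ (traj F X U k) (U k) - c) - (ℓ (traj F X Ustar k) (Ustar k) - c)) : ℝ) : EReal))
        atTop) :
    ∀ U : ℕ → C,
      0 ≤ Filter.liminf
        (fun K : ℕ => (((∑ k ∈ Finset.range K,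
          (ℓ (traj F X U k) (U k) - ℓ (Xcl k) (μN (Xcl k)))) + K * δN : ℝ) : EReal))
        atTop :=
  mpc_approximately_overtaking_optimal_general F ℓ c X μN Xcl VX δN hperf Ustar hVX hop
end
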